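/- arXiv:1206.6812 — 3 statements merged into one kernel-verified Lean document; each statement's English description precedes it below -/
import Mathlib

section
/- Stirling approximation for the two-parameter Poisson–Dirichlet EPPF weights: let α ∈ (0,1), θ > -α, s > 0, and set k_n = ⌈s·n^α⌉. Then, as n → ∞, the ratio of (θ+α)_{(k_n-1)↑α} / (θ+1)_{n-1} to (α^(k_n-1) · Γ(k_n) / Γ(n)) · (Γ(θ+1)/Γ(θ/α+1)) · (k_n / n^α)^(θ/α) tends to 1. -/
/-!
Both weights are ratios of Gamma values: `(θ+α)_{(k-1)↑α} = α^(k-1) Γ(k+θ/α) / Γ(θ/α+1)` and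
`(θ+1)_{n-1} = Γ(n+θ) / Γ(θ+1)`. Hence the ratio in the theorem is exactly
`[Γ(k+θ/α) / (Γ(k) k^(θ/α))] / [Γ(n+θ) / (Γ(n) n^θ)]`, and both brackets tend to `1` by
`Γ(m+a) ~ Γ(m) m^a` (a consequence of Euler's limit formula), because `k_n → ∞`.
-/

/-- Rising factorial `(x)_n = x(x+1)⋯(x+n-1)`, with `(x)_0 = 1`. -/
noncomputable def risingFactorial (x : ℝ) (n : ℕ) : ℝ :=
  ∏ i ∈ Finset.range n, (x + i)

/-- Generalized rising factorial `(x)_{k↑α} = x(x+α)(x+2α)⋯(x+(k-1)α)`, with `(x)_{0↑α} = 1`. -/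
noncomputable def genRisingFactorial (x α : ℝ) (k : ℕ) : ℝ :=
  ∏ i ∈ Finset.range k, (x + i * α)

open Filter Topology

lemma Gamma_add_nat_eq_Gamma_mul_risingFactorial {x : ℝ} (hx : ∀ k : ℕ, x + k ≠ 0) (n : ℕ) :
    Real.Gamma (x + n) = Real.Gamma x * risingFactorial x n := by
  induction n with
  | zero => simp [risingFactorial]
  | succ n ih =>
    rw [risingFactorial, Finset.prod_range_succ, ← risingFactorial, Nat.cast_succ, ← add_assoc,
      Real.Gamma_add_one (hx n), ih]
    ring

lemma risingFactorial_eq_Gamma_div_Gamma {x : ℝ} (hx : ∀ k : ℕ, x + k ≠ 0) (n : ℕ) :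
    risingFactorial x n = Real.Gamma (x + n) / Real.Gamma x := by
  have hΓ : Real.Gamma x ≠ 0 :=
    Real.Gamma_ne_zero fun m h => hx m (by rw [h]; ring)
  rw [Gamma_add_nat_eq_Gamma_mul_risingFactorial hx, mul_div_cancel_left₀ _ hΓ]

lemma genRisingFactorial_eq_pow_mul_risingFactorial (x : ℝ) {α : ℝ} (hα : α ≠ 0) (k : ℕ) :
    genRisingFactorial x α k = α ^ k * risingFactorial (x / α) k := by
  rw [genRisingFactorial, risingFactorial, Finset.pow_eq_prod_const, ← Finset.prod_mul_distrib]
  refine Finset.prod_congr rfl fun i _ => ?_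
  field_simp

lemma risingFactorial_add_one_sub_one {x : ℝ} (hx : -1 < x) {n : ℕ} (hn : 1 ≤ n) :
    risingFactorial (x + 1) (n - 1) = Real.Gamma (n + x) / Real.Gamma (x + 1) := by
  have hx' : ∀ k : ℕ, x + 1 + k ≠ 0 := fun k => by linarith [k.cast_nonneg' (α := ℝ)]
  rw [risingFactorial_eq_Gamma_div_Gamma hx', Nat.cast_sub hn]
  ring_nf

lemma genRisingFactorial_add_self_sub_one {x α : ℝ} (hα : α ≠ 0) (hx : -1 < x / α) {k : ℕ}
    (hk : 1 ≤ k) :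
    genRisingFactorial (x + α) α (k - 1) =
      α ^ (k - 1) * (Real.Gamma (k + x / α) / Real.Gamma (x / α + 1)) := by
  rw [genRisingFactorial_eq_pow_mul_risingFactorial _ hα, add_div, div_self hα,
    risingFactorial_add_one_sub_one hx hk]

-- Euler's limit formula `GammaSeq (a + 1) n → Γ(a + 1)`, rewritten at `m = n + 1`.
lemma tendsto_Gamma_nat_add_div_Gamma_mul_rpow {a : ℝ} (ha : -1 < a) :
    Tendsto (fun m : ℕ => Real.Gamma (m + a) / (Real.Gamma m * (m : ℝ) ^ a)) atTop (𝓝 1) := by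
  set b := a + 1
  have hb : 0 < b := by linarith
  have hb' : ∀ k : ℕ, b + k ≠ 0 := fun k => by positivity
  have hΓb : Real.Gamma b ≠ 0 := (Real.Gamma_pos_of_pos hb).ne'
  have hEuler : Tendsto (fun n : ℕ => Real.Gamma b / Real.GammaSeq b n) atTop (𝓝 1) := by
    have h := (tendsto_const_nhds (x := Real.Gamma b)).div (Real.GammaSeq_tendsto_Gamma b) hΓb
    rwa [div_self hΓb] at h
  have hpow : Tendsto (fun n : ℕ => ((n : ℝ) / (n + 1)) ^ a) atTop (𝓝 1) := by
    simpa using (tendsto_natCast_div_add_atTop (1 : ℝ)).rpow_const (p := a) (Or.inl one_ne_zero)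
  rw [← tendsto_add_atTop_iff_nat 1]
  have hlim := (hEuler.mul (tendsto_natCast_div_add_atTop b)).mul hpow
  rw [one_mul, one_mul] at hlim
  refine hlim.congr' ((eventually_ge_atTop 1).mono fun n hn => ?_)
  have hn0 : (0 : ℝ) < n := by exact_mod_cast hn
  have hnum : Real.Gamma (n + 1 + a) = Real.Gamma b * risingFactorial b n := by
    rw [← Gamma_add_nat_eq_Gamma_mul_risingFactorial hb']
    congr 1
    simp only [b]
    ring
  have hseq : Real.GammaSeq b n = n ^ a * n * n.factorial / (risingFactorial b n * (b + n)) := by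
    rw [Real.GammaSeq, Finset.prod_range_succ, ← risingFactorial, Real.rpow_add_one hn0.ne']
  have hrf : 0 < risingFactorial b n := Finset.prod_pos fun i _ => by positivity
  push_cast
  rw [hnum, Real.Gamma_nat_eq_factorial, hseq, Real.div_rpow hn0.le (by positivity)]
  field_simp
  ring

lemma stirling_ratio_eq {α θ : ℝ} (hα : α ≠ 0) (hθα : -1 < θ / α) (hθ : -1 < θ) {K n : ℕ}
    (hK : 1 ≤ K) (hn : 1 ≤ n) :
    (genRisingFactorial (θ + α) α (K - 1) / risingFactorial (θ + 1) (n - 1)) /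
        ((α ^ (K - 1) * Real.Gamma K / Real.Gamma n) *
          (Real.Gamma (θ + 1) / Real.Gamma (θ / α + 1)) * ((K : ℝ) / (n : ℝ) ^ α) ^ (θ / α)) =
      (Real.Gamma (K + θ / α) / (Real.Gamma K * (K : ℝ) ^ (θ / α))) /
        (Real.Gamma (n + θ) / (Real.Gamma n * (n : ℝ) ^ θ)) := by
  have hn1 : (1 : ℝ) ≤ n := Nat.one_le_cast.mpr hn
  have hK1 : (1 : ℝ) ≤ K := Nat.one_le_cast.mpr hK
  rw [genRisingFactorial_add_self_sub_one hα hθα hK, risingFactorial_add_one_sub_one hθ hn,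
    Real.div_rpow (by positivity) (by positivity), ← Real.rpow_mul (by positivity),
    mul_div_cancel₀ θ hα]
  -- keeps `field_simp` from rewriting inside the arguments of `Γ`
  generalize θ / α = a at hθα ⊢
  have := Real.Gamma_pos_of_pos (by linarith : (0 : ℝ) < K)
  have := Real.Gamma_pos_of_pos (by linarith : (0 : ℝ) < n)
  have := Real.Gamma_pos_of_pos (by linarith : 0 < θ + 1)
  have := Real.Gamma_pos_of_pos (by linarith : 0 < a + 1)
  have := Real.Gamma_pos_of_pos (by linarith : 0 < K + a)
  have := Real.Gamma_pos_of_pos (by linarith : 0 < n + θ)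
  field_simp

/-- Stirling approximation for the two-parameter Poisson–Dirichlet EPPF weights:
for `α ∈ (0,1)`, `θ > -α`, `s > 0` and `k_n = ⌈s·n^α⌉`, the ratio of
`(θ+α)_{(k_n-1)↑α} / (θ+1)_{n-1}` to
`(α^(k_n-1)·Γ(k_n)/Γ(n)) · (Γ(θ+1)/Γ(θ/α+1)) · (k_n/n^α)^(θ/α)` tends to `1`. -/
theorem stirling_PD_weights (α θ s : ℝ) (hα : α ∈ Set.Ioo (0:ℝ) 1)
    (hθ : θ > -α) (hs : 0 < s) :
    Filter.Tendsto
      (fun n : ℕ =>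
        (genRisingFactorial (θ + α) α (⌈s * (n : ℝ) ^ α⌉₊ - 1) /
            risingFactorial (θ + 1) (n - 1)) /
          ((α ^ (⌈s * (n : ℝ) ^ α⌉₊ - 1) * Real.Gamma (⌈s * (n : ℝ) ^ α⌉₊) /
              Real.Gamma n) *
            (Real.Gamma (θ + 1) / Real.Gamma (θ / α + 1)) *
            ((⌈s * (n : ℝ) ^ α⌉₊ : ℝ) / (n : ℝ) ^ α) ^ (θ / α)))
      Filter.atTop (nhds 1) := by
  obtain ⟨hα0, hα1⟩ := hα
  have hθ1 : -1 < θ := by linarith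
  have hθα : -1 < θ / α := by rw [lt_div_iff₀ hα0]; linarith
  have hk : Tendsto (fun n : ℕ => ⌈s * (n : ℝ) ^ α⌉₊) atTop atTop :=
    tendsto_nat_ceil_atTop.comp <|
      ((tendsto_rpow_atTop hα0).comp tendsto_natCast_atTop_atTop).const_mul_atTop hs
  have hlim := ((tendsto_Gamma_nat_add_div_Gamma_mul_rpow hθα).comp hk).div
    (tendsto_Gamma_nat_add_div_Gamma_mul_rpow hθ1) one_ne_zero
  rw [div_one] at hlim
  refine hlim.congr' ?_
  filter_upwards [eventually_ge_atTop 1, hk.eventually_ge_atTop 1] with n hn hK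
  exact (stirling_ratio_eq hα0.ne' hθα hθ1 hK hn).symm
end

section
/- Generalized Stirling numbers as partial Bell polynomials: let α ∈ (0,1) and let n, k be integers with 1 ≤ k ≤ n. Then (n!/k!) · Σ_{(n_1,…,n_k)} Π_{j=1}^{k} (1-α)_{n_j - 1} / n_j! = (1/(α^k · k!)) · Σ_{j=1}^{k} (-1)^j · C(k, j) · (-jα)_n, where the left sum ranges over all compositions (n_1, …, n_k) of n into k positive integer parts (ordered tuples with n_j ≥ 1 and n_1 + ⋯ + n_k = n). -/
open Finset PowerSeries
open scoped Nat

open Polynomial in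
lemma risingFactorial_eq_ascPochhammer_eval (x : ℝ) (n : ℕ) :
    risingFactorial x n = (ascPochhammer ℝ n).eval x := by
  induction n with
  | zero => simp [risingFactorial]
  | succ n ih =>
    rw [risingFactorial, prod_range_succ, ← risingFactorial, ih, ascPochhammer_succ_eval]

open Polynomial in
lemma risingFactorial_succ_eq_mul (x : ℝ) (n : ℕ) :
    risingFactorial x (n + 1) = x * risingFactorial (x + 1) n := by
  simp only [risingFactorial_eq_ascPochhammer_eval, ascPochhammer_succ_left, eval_mul, eval_X,
    eval_comp, eval_add, eval_one]

lemma Ring.multichoose_eq_risingFactorial_div (x : ℝ) (n : ℕ) :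
    Ring.multichoose x n = risingFactorial x n / n ! := by
  rw [risingFactorial_eq_ascPochhammer_eval, ← Polynomial.ascPochhammer_smeval_eq_eval,
    ← Ring.factorial_nsmul_multichoose_eq_ascPochhammer, nsmul_eq_mul]
  field_simp

namespace PowerSeries

lemma binomialSeries_nsmul {R A : Type*} [CommRing R] [BinomialRing R] [Ring A] [Algebra R A]
    (r : R) (j : ℕ) : binomialSeries A (j • r) = binomialSeries A r ^ j := by
  induction j with
  | zero => simp
  | succ j ih => rw [succ_nsmul, binomialSeries_add, ih, pow_succ]

lemma coeff_rescale_neg_one_binomialSeries (a : ℝ) (m : ℕ) :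
    coeff m (rescale (-1) (binomialSeries ℝ a)) = risingFactorial (-a) m / m ! := by
  rw [coeff_rescale, binomialSeries_coeff, smul_eq_mul, mul_one, ← neg_neg a, Ring.choose_neg',
    neg_neg, Ring.multichoose_eq_risingFactorial_div, Units.smul_def, zsmul_eq_mul,
    Int.cast_negOnePow_natCast, ← mul_assoc, ← mul_pow]
  simp

lemma coeff_pow_eq_sum_antidiagonalTuple {R : Type*} [CommSemiring R] (ψ : R⟦X⟧) (k n : ℕ) :
    coeff n (ψ ^ k) = ∑ f ∈ Nat.antidiagonalTuple k n, ∏ j, coeff (f j) ψ := by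
  rw [← Fin.prod_const, coeff_prod]
  refine sum_equiv Finsupp.equivFunOnFinite (fun l => ?_) fun l _ => rfl
  simp [Nat.mem_antidiagonalTuple]

lemma coeff_pow_of_constantCoeff_eq_zero {R : Type*} [CommSemiring R] {ψ : R⟦X⟧}
    (hψ : constantCoeff ψ = 0) (k n : ℕ) :
    coeff n (ψ ^ k) =
      ∑ f ∈ (Nat.antidiagonalTuple k n).filter (fun f => ∀ j, 1 ≤ f j), ∏ j, coeff (f j) ψ := by
  rw [coeff_pow_eq_sum_antidiagonalTuple, sum_filter_of_ne]
  intro f _ hprod j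
  by_contra! hj
  exact hprod (prod_eq_zero (mem_univ j) (by simpa [Nat.lt_one_iff.mp hj] using hψ))

lemma coeff_one_sub_pow {R : Type*} [CommRing R] (ψ : R⟦X⟧) (k : ℕ) {n : ℕ} (hn : n ≠ 0) :
    coeff n ((1 - ψ) ^ k) = ∑ j ∈ Icc 1 k, (-1) ^ j * k.choose j * coeff n (ψ ^ j) := by
  have hexpand : (1 - ψ) ^ k = ∑ j ∈ range (k + 1), C ((-1) ^ j * k.choose j : R) * ψ ^ j := by
    rw [sub_eq_neg_add, add_pow]
    refine sum_congr rfl fun j _ => ?_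
    rw [neg_pow, one_pow, mul_one, map_mul, map_pow, map_neg, map_one, map_natCast]
    ring
  rw [hexpand, map_sum, range_eq_Ico, sum_eq_sum_Ico_succ_bot (by omega)]
  simp only [coeff_C_mul, pow_zero, coeff_one, if_neg hn, mul_zero, zero_add]
  rfl

lemma coeff_one_sub_rescale_neg_one_binomialSeries (a : ℝ) {m : ℕ} (hm : m ≠ 0) :
    coeff m (1 - rescale (-1) (binomialSeries ℝ a)) =
      a * (risingFactorial (1 - a) (m - 1) / m !) := by
  obtain ⟨m, rfl⟩ := Nat.exists_eq_succ_of_ne_zero hm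
  rw [map_sub, coeff_one, if_neg hm, coeff_rescale_neg_one_binomialSeries,
    risingFactorial_succ_eq_mul, neg_add_eq_sub, Nat.succ_sub_one]
  ring

end PowerSeries

/-- Generalized Stirling numbers as partial Bell polynomials: for `α ∈ (0,1)` and
integers `1 ≤ k ≤ n`,
`(n!/k!) Σ_{(n_1,…,n_k)} Π_j (1-α)_{n_j-1}/n_j! = (1/(α^k k!)) Σ_{j=1}^k (-1)^j C(k,j)(-jα)_n`,
the left sum ranging over all compositions of `n` into `k` positive parts. -/
theorem bell_polynomial_eq_toscano (α : ℝ) (hα : α ∈ Set.Ioo (0:ℝ) 1)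
    (n k : ℕ) (h1 : 1 ≤ k) (h2 : k ≤ n) :
    (Nat.factorial n : ℝ) / (Nat.factorial k : ℝ) *
        ∑ f ∈ (Finset.Nat.antidiagonalTuple k n).filter (fun f => ∀ j, 1 ≤ f j),
          ∏ j, risingFactorial (1 - α) (f j - 1) / (Nat.factorial (f j) : ℝ) =
      (1 / (α ^ k * (Nat.factorial k : ℝ))) *
        ∑ j ∈ Finset.Icc 1 k,
          (-1 : ℝ) ^ j * (k.choose j : ℝ) * risingFactorial (-(j : ℝ) * α) n := by
  have hn : n ≠ 0 := by omega
  set G : ℝ⟦X⟧ := rescale (-1) (binomialSeries ℝ α)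
  have hcompositions : coeff n ((1 - G) ^ k) = α ^ k *
      ∑ f ∈ (Nat.antidiagonalTuple k n).filter (fun f => ∀ j, 1 ≤ f j),
        ∏ j, risingFactorial (1 - α) (f j - 1) / (f j)! := by
    have hconst : constantCoeff (1 - G) = 0 := by
      rw [← coeff_zero_eq_constantCoeff_apply, map_sub, coeff_one, if_pos rfl,
        coeff_rescale_neg_one_binomialSeries]
      simp [risingFactorial]
    rw [coeff_pow_of_constantCoeff_eq_zero hconst, mul_sum]
    refine sum_congr rfl fun f hf => ?_
    have hpos : ∀ j, f j ≠ 0 := fun j => Nat.one_le_iff_ne_zero.mp ((mem_filter.mp hf).2 j)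
    simp only [G, coeff_one_sub_rescale_neg_one_binomialSeries α (hpos _), prod_mul_distrib,
      prod_const, card_univ, Fintype.card_fin]
  have hbinomial : coeff n ((1 - G) ^ k) =
      (∑ j ∈ Icc 1 k, (-1) ^ j * k.choose j * risingFactorial (-(j : ℝ) * α) n) / n ! := by
    rw [coeff_one_sub_pow _ _ hn, sum_div]
    refine sum_congr rfl fun j _ => ?_
    rw [← map_pow, ← binomialSeries_nsmul, coeff_rescale_neg_one_binomialSeries, nsmul_eq_mul,
      neg_mul, mul_div_assoc]
  rw [hcompositions, eq_div_iff (by positivity)] at hbinomial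
  rw [← hbinomial]
  field_simp [hα.1.ne']
end

section
/- Expansion of rising factorials in generalized rising factorials with explicit Toscano coefficients: let α be a nonzero real number and n ≥ 1 an integer. Then for every real x, (x)_n = Σ_{k=1}^{n} [ (1/(α^k · k!)) · Σ_{j=1}^{k} (-1)^j · C(k, j) · (-jα)_n ] · (x)_{k↑α}. -/
/-!
Both sides are polynomials in `x` of degree at most `n`, so it suffices to compare them at the
`n + 1` nodes `x = -mα`, `0 ≤ m ≤ n`. There `(x)_{k↑α} = (-α)^k m!/(m-k)!`, which cancels the
normalisation `α^k k!` and leaves `∑_k (-1)^k C(m,k) ∑_j (-1)^j C(k,j) f(j)` with `f(j) = (-jα)_n`.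
This is `f(m)` by binomial inversion, i.e. the Gregory–Newton forward-difference formula; the sums
may start at `1` because `f(0) = (0)_n = 0`.
-/

open Finset Polynomial fwdDiff

lemma sum_Icc_one_eq_sum_range_succ {M : Type*} [AddCommMonoid M] {g : ℕ → M} (hg : g 0 = 0)
    (k : ℕ) : ∑ j ∈ Icc 1 k, g j = ∑ j ∈ range (k + 1), g j := by
  rw [range_eq_Ico, sum_eq_sum_Ico_succ_bot k.succ_pos, hg, zero_add]
  rfl

section BinomialInversion

variable {R : Type*} [CommRing R]

lemma sum_range_neg_one_pow_mul_choose_mul_eq_fwdDiff_iter (f : ℕ → R) (k : ℕ) :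
    ∑ j ∈ range (k + 1), (-1) ^ j * (k.choose j : R) * f j = (-1) ^ k * (Δ_[1])^[k] f 0 := by
  rw [fwdDiff_iter_eq_sum_shift, mul_sum]
  refine sum_congr rfl fun j hj => ?_
  obtain ⟨i, rfl⟩ := Nat.exists_eq_add_of_le (Nat.lt_succ_iff.mp (mem_range.mp hj))
  have hsq : (-1 : R) ^ (i * 2) = 1 := by rw [pow_mul']; simp
  rw [Nat.add_sub_cancel_left, zsmul_eq_mul, zero_add, smul_eq_mul, mul_one]
  push_cast
  linear_combination -((-1) ^ j * ((j + i).choose j : R) * f j) * hsq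

theorem binomial_inversion (f : ℕ → R) {m N : ℕ} (hmN : m ≤ N) :
    ∑ k ∈ range (N + 1), (-1) ^ k * (m.choose k : R) *
      ∑ j ∈ range (k + 1), (-1) ^ j * (k.choose j : R) * f j = f m := by
  have hvanish : ∀ k ∈ range (N + 1), k ∉ range (m + 1) →
      (-1) ^ k * (m.choose k : R) * ∑ j ∈ range (k + 1), (-1) ^ j * (k.choose j : R) * f j = 0 :=
    fun k _ hk => by rw [Nat.choose_eq_zero_of_lt (by simpa using hk)]; simp
  rw [← sum_subset (range_subset_range.mpr (by omega)) hvanish]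
  calc _ = ∑ k ∈ range (m + 1), m.choose k • (Δ_[1])^[k] f 0 := by
        refine sum_congr rfl fun k _ => ?_
        rw [sum_range_neg_one_pow_mul_choose_mul_eq_fwdDiff_iter, nsmul_eq_mul]
        have hsq : (-1 : R) ^ (k * 2) = 1 := by rw [pow_mul']; simp
        linear_combination (m.choose k : R) * (Δ_[1])^[k] f 0 * hsq
    _ = f m := by rw [← shift_eq_sum_fwdDiff_iter, zero_add, smul_eq_mul, mul_one]

end BinomialInversion

lemma genRisingFactorial_neg_natCast_mul (α : ℝ) (m k : ℕ) :
    genRisingFactorial (-(m : ℝ) * α) α k = (-α) ^ k * m.descFactorial k := by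
  rw [genRisingFactorial, ← descPochhammer_eval_eq_descFactorial, descPochhammer_eval_eq_prod_range]
  calc _ = ∏ i ∈ range k, -α * ((m : ℝ) - i) := prod_congr rfl fun i _ => by ring
    _ = _ := by rw [← pow_card_mul_prod, card_range]

lemma risingFactorial_eq_genRisingFactorial_one (x : ℝ) (n : ℕ) :
    risingFactorial x n = genRisingFactorial x 1 n := by
  simp [risingFactorial, genRisingFactorial]

lemma risingFactorial_zero_left {n : ℕ} (hn : n ≠ 0) : risingFactorial 0 n = 0 :=
  prod_eq_zero (mem_range.mpr (Nat.pos_of_ne_zero hn)) (by simp)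

/-- For `f j = (-jα)_n` this is Toscano's coefficient `S_{n,k}^{-1,-α}`. -/
noncomputable def toscanoCoeff (α : ℝ) (f : ℕ → ℝ) (k : ℕ) : ℝ :=
  1 / (α ^ k * k.factorial) * ∑ j ∈ Icc 1 k, (-1) ^ j * (k.choose j : ℝ) * f j

lemma toscanoCoeff_mul_genRisingFactorial_neg_natCast_mul {α : ℝ} (hα : α ≠ 0) (f : ℕ → ℝ)
    (m k : ℕ) :
    toscanoCoeff α f k * genRisingFactorial (-(m : ℝ) * α) α k =
      (-1) ^ k * (m.choose k : ℝ) * ∑ j ∈ Icc 1 k, (-1) ^ j * (k.choose j : ℝ) * f j := by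
  rw [toscanoCoeff, genRisingFactorial_neg_natCast_mul, Nat.descFactorial_eq_factorial_mul_choose,
    neg_pow]
  have hk : (k.factorial : ℝ) ≠ 0 := by positivity
  field_simp
  push_cast
  ring

theorem sum_toscanoCoeff_mul_genRisingFactorial_neg_natCast_mul {α : ℝ} (hα : α ≠ 0)
    {f : ℕ → ℝ} (hf : f 0 = 0) {m N : ℕ} (hmN : m ≤ N) :
    ∑ k ∈ Icc 1 N, toscanoCoeff α f k * genRisingFactorial (-(m : ℝ) * α) α k = f m := by
  simp only [toscanoCoeff_mul_genRisingFactorial_neg_natCast_mul hα,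
    sum_Icc_one_eq_sum_range_succ (g := fun j => (-1) ^ j * _ * f j) (by simp [hf])]
  rw [sum_Icc_one_eq_sum_range_succ (by simp [hf]), binomial_inversion f hmN]

noncomputable def genRisingFactorialPoly (α : ℝ) (k : ℕ) : ℝ[X] :=
  ∏ i ∈ range k, (X + C ((i : ℝ) * α))

lemma eval_genRisingFactorialPoly (x α : ℝ) (k : ℕ) :
    (genRisingFactorialPoly α k).eval x = genRisingFactorial x α k := by
  simp [genRisingFactorialPoly, genRisingFactorial, eval_prod]

lemma natDegree_genRisingFactorialPoly (α : ℝ) (k : ℕ) :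
    (genRisingFactorialPoly α k).natDegree = k := by
  rw [genRisingFactorialPoly]
  have h := natDegree_finsetProd_X_sub_C_eq_card (range k) fun i => -((i : ℝ) * α)
  simpa only [map_neg, sub_neg_eq_add, card_range] using h

/-- Expansion of rising factorials in generalized rising factorials with the explicit
Toscano coefficients: for `α ≠ 0`, `n ≥ 1` and every real `x`,
`(x)_n = Σ_{k=1}^n [ (1/(α^k k!)) Σ_{j=1}^k (-1)^j C(k,j)(-jα)_n ] (x)_{k↑α}`. -/
theorem risingFactorial_expansion_toscano (α : ℝ) (hα : α ≠ 0) (n : ℕ) (hn : 1 ≤ n)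
    (x : ℝ) :
    risingFactorial x n =
      ∑ k ∈ Finset.Icc 1 n,
        ((1 / (α ^ k * (Nat.factorial k : ℝ))) *
            ∑ j ∈ Finset.Icc 1 k,
              (-1 : ℝ) ^ j * (k.choose j : ℝ) * risingFactorial (-(j : ℝ) * α) n) *
          genRisingFactorial x α k := by
  set f : ℕ → ℝ := fun j => risingFactorial (-(j : ℝ) * α) n
  have hf : f 0 = 0 := by simpa [f] using risingFactorial_zero_left (n := n) (by omega)
  have hnodes : Function.Injective fun m : Fin (n + 1) => -(m : ℝ) * α :=
    (mul_left_injective₀ hα).comp (neg_injective.comp (Nat.cast_injective.comp Fin.val_injective))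
  have hpoly : genRisingFactorialPoly 1 n =
      ∑ k ∈ Icc 1 n, C (toscanoCoeff α f k) * genRisingFactorialPoly α k := by
    refine eq_of_natDegree_lt_card_of_eval_eq _ _ hnodes (fun m => ?_) ?_
    · simp only [eval_finsetSum, eval_mul, eval_C, eval_genRisingFactorialPoly,
        ← risingFactorial_eq_genRisingFactorial_one]
      exact (sum_toscanoCoeff_mul_genRisingFactorial_neg_natCast_mul hα hf m.is_le).symm
    · rw [Fintype.card_fin, natDegree_genRisingFactorialPoly, max_lt_iff, Nat.lt_succ_iff,
        Nat.lt_succ_iff]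
      refine ⟨le_rfl, natDegree_sum_le_of_forall_le _ _ fun k hk => ?_⟩
      exact (natDegree_C_mul_le _ _).trans ((natDegree_genRisingFactorialPoly α k).trans_le
        (mem_Icc.mp hk).2)
  have hx := congrArg (eval x) hpoly
  simp only [eval_finsetSum, eval_mul, eval_C, eval_genRisingFactorialPoly,
    ← risingFactorial_eq_genRisingFactorial_one] at hx
  exact hx
end
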